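/- arXiv:1810.02735 — 2 statements merged into one kernel-verified Lean document; each statement's English description precedes it below -/
import Mathlib

section
/- Let w = (w_i)_{i≥1} be positive reals with partial sums s_i = w_1+⋯+w_i. For n ≥ 1 let T_n be the n-node w-WRRT and, given T_n, let u_n be a node chosen at random with probability proportional to the weights (P(u_n = ν_i) = w_i/s_n). Then the random variables (1_{ν_i ⪯ u_n})_{1≤i≤n}, where ν_i ⪯ u_n means ν_i is an ancestor of u_n or equals u_n, are independent Bernoulli random variables with respective parameters w_i/s_i. -/
/-!
Induction on `n`. Given `T_n`, the node `u_{n+1}` is `ν_{n+1}` with probability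
`w_{n+1}/s_{n+1}` and otherwise a weight-proportional node of `T_n`; in the first case its
ancestors are `ν_{n+1}` and the ancestors of the parent of `ν_{n+1}`, which is again a
weight-proportional node of `T_n`. Either way the ancestor indicators at `ν_1, …, ν_n` have
the law they have for `(T_n, u_n)`, independently of `1_{ν_{n+1} ⪯ u_{n+1}}`, so
`P(ν_i ⪯ u_n for all i ∈ S) = ∏_{i ∈ S} w_i/s_i` for every `S ⊆ {1, …, n}`.
-/

open MeasureTheory ProbabilityTheory Finset
open scoped Classical

/-- `i` is a (non-strict) ancestor of `j` in the tree with parent map `p`: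
some iterate of the parent map sends `j` to `i`. -/
def isAnc (p : ℕ → ℕ) (i j : ℕ) : Prop := ∃ k : ℕ, p^[k] j = i

open Function

def IsParentMap (p : ℕ → ℕ) : Prop := ∀ x, 1 ≤ x → 1 ≤ p x ∧ p x ≤ x

namespace IsParentMap

variable {p f : ℕ → ℕ} {i j : ℕ}

lemma iterate_mem_Icc (hp : IsParentMap p) (hj : 1 ≤ j) (t : ℕ) : p^[t] j ∈ Icc 1 j := by
  induction t with
  | zero => simpa using hj
  | succ t ih =>
    rw [mem_Icc] at ih ⊢
    rw [iterate_succ_apply']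
    have := hp _ ih.1
    omega

lemma iterate_eq_of_eqOn (hp : IsParentMap p) (hj : 1 ≤ j) (hfp : ∀ x ∈ Icc 1 j, f x = p x)
    (t : ℕ) : f^[t] j = p^[t] j := by
  induction t with
  | zero => rfl
  | succ t ih =>
    rw [iterate_succ_apply', iterate_succ_apply', ih, hfp _ (hp.iterate_mem_Icc hj t)]

lemma isAnc_iff_of_eqOn (hp : IsParentMap p) (hj : 1 ≤ j) (hfp : ∀ x ∈ Icc 1 j, f x = p x) :
    isAnc f i j ↔ isAnc p i j := by
  simp only [isAnc, hp.iterate_eq_of_eqOn hj hfp]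

lemma le_of_isAnc (hp : IsParentMap p) (hj : 1 ≤ j) (h : isAnc p i j) : i ≤ j := by
  obtain ⟨t, rfl⟩ := h
  exact (mem_Icc.1 (hp.iterate_mem_Icc hj t)).2

lemma update {a k : ℕ} (hp : IsParentMap p) (hk : 1 ≤ k) (hka : k ≤ a) :
    IsParentMap (update p a k) := by
  intro x hx
  rcases eq_or_ne x a with rfl | hxa
  · simpa using ⟨hk, hka⟩
  · rw [update_of_ne hxa]
    exact hp x hx

lemma isAnc_update_of_lt {a k : ℕ} (hp : IsParentMap p) (hj : 1 ≤ j) (hja : j < a) :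
    isAnc (Function.update p a k) i j ↔ isAnc p i j :=
  hp.isAnc_iff_of_eqOn hj fun x hx => update_of_ne (by grind) _ _

lemma isAnc_update_self {a k : ℕ} (hp : IsParentMap p) (hk : 1 ≤ k) (hka : k < a) :
    isAnc (Function.update p a k) i a ↔ i = a ∨ isAnc p i k := by
  have hiter (t : ℕ) : (Function.update p a k)^[t + 1] a = p^[t] k := by
    rw [iterate_succ_apply, update_self]
    exact hp.iterate_eq_of_eqOn hk (fun x hx => update_of_ne (by grind) _ _) t
  constructor
  · rintro ⟨_ | t, rfl⟩
    · exact Or.inl rfl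
    · exact Or.inr ⟨t, (hiter t).symm⟩
  · rintro (rfl | ⟨t, rfl⟩)
    · exact ⟨0, rfl⟩
    · exact ⟨t + 1, hiter t⟩

end IsParentMap

noncomputable def parentMaps : ℕ → Finset (ℕ → ℕ)
  | 0 | 1 => {fun _ => 1}
  | n + 2 => (parentMaps (n + 1) ×ˢ Icc 1 (n + 1)).image fun q => update q.1 (n + 2) q.2

lemma parentMaps_succ {n : ℕ} (hn : 1 ≤ n) :
    parentMaps (n + 1) = (parentMaps n ×ˢ Icc 1 n).image fun q => update q.1 (n + 1) q.2 := by
  obtain ⟨n, rfl⟩ := Nat.exists_eq_add_of_le' hn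
  rfl

lemma mem_parentMaps {n : ℕ} {π : ℕ → ℕ} :
    π ∈ parentMaps n ↔ (∀ m ∈ Icc 2 n, π m ∈ Icc 1 (m - 1)) ∧ ∀ m ∉ Icc 2 n, π m = 1 := by
  induction n generalizing π with
  | zero => simp [parentMaps, funext_iff]
  | succ n ih =>
    rcases Nat.eq_zero_or_pos n with rfl | hn
    · simp [parentMaps, funext_iff]
    rw [parentMaps_succ hn, mem_image]
    constructor
    · rintro ⟨⟨σ, k⟩, hq, rfl⟩
      rw [mem_product, ih, mem_Icc] at hq
      dsimp only
      obtain ⟨⟨hσ, hσ1⟩, hk⟩ := hq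
      refine ⟨fun m hm => ?_, fun m hm => ?_⟩
      · rcases eq_or_ne m (n + 1) with rfl | hmn
        · simp [hk.1, hk.2]
        · rw [update_of_ne hmn]
          exact hσ m (by grind)
      · rw [update_of_ne (by grind)]
        exact hσ1 m (by grind)
    · rintro ⟨hπ, hπ1⟩
      refine ⟨(update π (n + 1) 1, π (n + 1)), ?_, by simp⟩
      rw [mem_product, ih]
      dsimp only
      refine ⟨⟨fun m hm => ?_, fun m hm => ?_⟩, by simpa using hπ (n + 1) (by grind)⟩
      · rw [update_of_ne (by grind)]
        exact hπ m (by grind)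
      · rcases eq_or_ne m (n + 1) with rfl | hmn
        · simp
        · rw [update_of_ne hmn]
          exact hπ1 m (by grind)

lemma isParentMap_of_mem_parentMaps {n : ℕ} {π : ℕ → ℕ} (h : π ∈ parentMaps n) :
    IsParentMap π := by
  rw [mem_parentMaps] at h
  intro x hx
  by_cases hxn : x ∈ Icc 2 n
  · have := mem_Icc.1 (h.1 x hxn)
    omega
  · rw [h.2 x hxn]
    omega

lemma sum_parentMaps_succ {M : Type*} [AddCommMonoid M] {n : ℕ} (hn : 1 ≤ n)
    (g : (ℕ → ℕ) → M) :
    ∑ π ∈ parentMaps (n + 1), g π = ∑ π ∈ parentMaps n, ∑ k ∈ Icc 1 n, g (update π (n + 1) k) := by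
  rw [parentMaps_succ hn, sum_image, sum_product]
  rintro ⟨σ, k⟩ hq ⟨σ', k'⟩ hq' h
  have hroot {τ : ℕ → ℕ} {l : ℕ} (hτ : (τ, l) ∈ parentMaps n ×ˢ Icc 1 n) :
      τ = update (update τ (n + 1) l) (n + 1) 1 := by
    rw [update_idem, eq_comm, update_eq_self_iff]
    exact ((mem_parentMaps.1 (mem_product.1 hτ).1).2 _ (by simp)).symm
  have hk : k = k' := by simpa using congrFun h (n + 1)
  simp only at h
  rw [Prod.mk.injEq, hroot hq, hroot hq', h]
  exact ⟨rfl, hk⟩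

section Expectation

variable (w s : ℕ → ℝ)

noncomputable def treeWeight (n : ℕ) (π : ℕ → ℕ) : ℝ := ∏ m ∈ Icc 2 n, w (π m) / s (m - 1)

/-- The expectation of `f (T_n, u_n)`. -/
noncomputable def wrrtExpect (n : ℕ) (f : (ℕ → ℕ) → ℕ → ℝ) : ℝ :=
  ∑ π ∈ parentMaps n, ∑ j ∈ Icc 1 n, treeWeight w s n π * (w j / s n) * f π j

variable {w s} {n : ℕ}

lemma treeWeight_update (hn : 1 ≤ n) (π : ℕ → ℕ) (k : ℕ) :
    treeWeight w s (n + 1) (update π (n + 1) k) = treeWeight w s n π * (w k / s n) := by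
  rw [treeWeight, prod_Icc_succ_top (by omega), update_self, Nat.add_sub_cancel]
  congr 1
  exact prod_congr rfl fun m hm => by rw [update_of_ne (by grind)]

lemma wrrtExpect_congr {f g : (ℕ → ℕ) → ℕ → ℝ}
    (h : ∀ π ∈ parentMaps n, ∀ j ∈ Icc 1 n, f π j = g π j) :
    wrrtExpect w s n f = wrrtExpect w s n g :=
  sum_congr rfl fun π hπ => sum_congr rfl fun j hj => by rw [h π hπ j hj]

lemma wrrtExpect_succ (hn : 1 ≤ n) (hsn : s n ≠ 0) (f : (ℕ → ℕ) → ℕ → ℝ) :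
    wrrtExpect w s (n + 1) f =
      s n / s (n + 1) *
          wrrtExpect w s n (fun π j => ∑ k ∈ Icc 1 n, w k / s n * f (update π (n + 1) k) j) +
        w (n + 1) / s (n + 1) * wrrtExpect w s n (fun π k => f (update π (n + 1) k) (n + 1)) := by
  simp only [wrrtExpect, sum_parentMaps_succ hn, treeWeight_update hn,
    sum_Icc_succ_top (show 1 ≤ n + 1 by omega), sum_add_distrib, mul_sum]
  congr 1
  · refine sum_congr rfl fun π _ => ?_
    rw [sum_comm]
    refine sum_congr rfl fun j _ => sum_congr rfl fun k _ => ?_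
    field_simp
  · refine sum_congr rfl fun π _ => sum_congr rfl fun k _ => ?_
    ring

lemma sum_div_partialSum (hs : ∀ i, s i = ∑ j ∈ Icc 1 i, w j) (hsn : s n ≠ 0) :
    ∑ k ∈ Icc 1 n, w k / s n = 1 := by
  rw [← sum_div, ← hs, div_self hsn]

lemma wrrtExpect_forall_isAnc_of_lt {S : Finset ℕ} {a : ℕ} (ha : a ∈ S) (hna : n < a) :
    wrrtExpect w s n (fun π j => if ∀ i ∈ S, isAnc π i j then 1 else 0) = 0 := by
  rw [wrrtExpect_congr (g := fun _ _ => 0), wrrtExpect]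
  · simp
  intro π hπ j hj
  rw [if_neg fun h => ?_]
  have := (isParentMap_of_mem_parentMaps hπ).le_of_isAnc (mem_Icc.1 hj).1 (h a ha)
  grind

theorem wrrtExpect_forall_isAnc (hs : ∀ i, s i = ∑ j ∈ Icc 1 i, w j)
    (hs0 : ∀ i, 1 ≤ i → s i ≠ 0) (hn : 1 ≤ n) (S : Finset ℕ) (hS : S ⊆ Icc 1 n) :
    wrrtExpect w s n (fun π j => if ∀ i ∈ S, isAnc π i j then 1 else 0) = ∏ i ∈ S, w i / s i := by
  induction n, hn using Nat.le_induction generalizing S with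
  | base =>
    have hS1 : ∀ i ∈ S, i = 1 := fun i hi => by simpa using hS hi
    have hw1 : w 1 / s 1 = 1 := by simpa using sum_div_partialSum hs (hs0 1 le_rfl)
    rw [prod_eq_one fun i hi => by rw [hS1 i hi, hw1]]
    have hanc : ∀ i ∈ S, isAnc (fun _ => 1) i 1 := fun i hi => ⟨0, (hS1 i hi).symm⟩
    simp only [wrrtExpect, parentMaps, treeWeight, sum_singleton, Icc_self, if_pos hanc]
    simp [hw1]
  | succ n hn ih =>
    have hsn := hs0 n hn
    have hfirst : wrrtExpect w s n (fun π j => ∑ k ∈ Icc 1 n,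
          w k / s n * if ∀ i ∈ S, isAnc (update π (n + 1) k) i j then 1 else 0) =
        wrrtExpect w s n (fun π j => if ∀ i ∈ S, isAnc π i j then 1 else 0) := by
      refine wrrtExpect_congr fun π hπ j hj => ?_
      have hj := mem_Icc.1 hj
      simp only [← sum_mul,
        (isParentMap_of_mem_parentMaps hπ).isAnc_update_of_lt hj.1 (Nat.lt_succ_of_le hj.2),
        sum_div_partialSum hs hsn, one_mul]
    have hsecond : wrrtExpect w s n
          (fun π k => if ∀ i ∈ S, isAnc (update π (n + 1) k) i (n + 1) then 1 else 0) =
        ∏ i ∈ S.erase (n + 1), w i / s i := by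
      rw [← ih (S.erase (n + 1)) (fun i hi => by grind)]
      refine wrrtExpect_congr fun π hπ k hk => ?_
      have hk := mem_Icc.1 hk
      simp only [(isParentMap_of_mem_parentMaps hπ).isAnc_update_self hk.1 (Nat.lt_succ_of_le hk.2),
        mem_erase]
      grind
    rw [wrrtExpect_succ hn hsn, hfirst, hsecond]
    by_cases hS' : n + 1 ∈ S
    · rw [wrrtExpect_forall_isAnc_of_lt hS' (Nat.lt_succ_self n), ← mul_prod_erase S _ hS']
      ring
    · have hsucc : s n + w (n + 1) = s (n + 1) := by
        rw [hs, hs, sum_Icc_succ_top (by omega)]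
      rw [erase_eq_of_notMem hS', ih S (fun i hi => by grind), ← add_mul, ← add_div, hsucc,
        div_self (hs0 _ (by omega)), one_mul]

end Expectation

lemma partialSum_pos {w s : ℕ → ℝ} (hw : ∀ i, 1 ≤ i → 0 < w i)
    (hs : ∀ i, s i = ∑ j ∈ Icc 1 i, w j) {i : ℕ} (hi : 1 ≤ i) : 0 < s i := by
  rw [hs]
  exact sum_pos (fun j hj => hw j (mem_Icc.1 hj).1) ⟨i, mem_Icc.2 ⟨hi, le_rfl⟩⟩

lemma weight_div_partialSum_nonneg {w s : ℕ → ℝ} (hw : ∀ i, 1 ≤ i → 0 < w i)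
    (hs : ∀ i, s i = ∑ j ∈ Icc 1 i, w j) {i : ℕ} (hi : 1 ≤ i) (m : ℕ) : 0 ≤ w i / s m := by
  rw [hs]
  exact div_nonneg (hw i hi).le (sum_nonneg fun j hj => (hw j (mem_Icc.1 hj).1).le)

lemma treeWeight_nonneg {w s : ℕ → ℝ} (hw : ∀ i, 1 ≤ i → 0 < w i)
    (hs : ∀ i, s i = ∑ j ∈ Icc 1 i, w j) {n : ℕ} {π : ℕ → ℕ} (hπ : π ∈ parentMaps n) :
    0 ≤ treeWeight w s n π :=
  prod_nonneg fun m hm =>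
    weight_div_partialSum_nonneg hw hs (mem_Icc.1 ((mem_parentMaps.1 hπ).1 m hm)).1 _

lemma measurableSet_setOf_and_measure_eq_sum {Ω α : Type*} [MeasurableSpace Ω]
    [MeasurableSpace α] [MeasurableSingletonClass α] {μ : Measure Ω} {X : Ω → α}
    (hX : Measurable X) {F : Finset α} (hXF : ∀ ω, X ω ∈ F) (P : α → Prop) :
    MeasurableSet {ω | P (X ω)} ∧ μ {ω | P (X ω)} = ∑ a ∈ F with P a, μ (X ⁻¹' {a}) := by
  have hset : {ω | P (X ω)} = X ⁻¹' ↑(F.filter P) := by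
    ext ω
    simp [hXF ω]
  rw [hset, sum_measure_preimage_singleton _ fun a _ => hX (measurableSet_singleton a)]
  exact ⟨hX (F.filter P).measurableSet, rfl⟩

section Sample

variable {Ω : Type*} [MeasurableSpace Ω]

/-- `par` is the parent map of the `n`-node `w`-WRRT `T_n` (with the convention `par 1 = 1`) and
`u` is the node `u_n`. -/
structure IsWRRTSample (μ : Measure Ω) (w s : ℕ → ℝ) (n : ℕ) (par : ℕ → Ω → ℕ) (u : Ω → ℕ) :
    Prop where
  measurable_par : ∀ m, Measurable (par m)
  measurable_u : Measurable u
  par_one : ∀ ω, par 1 ω = 1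
  par_lt : ∀ m, 2 ≤ m → m ≤ n → ∀ ω, 1 ≤ par m ω ∧ par m ω < m
  u_mem : ∀ ω, 1 ≤ u ω ∧ u ω ≤ n
  law : ∀ π : ℕ → ℕ, (∀ m, 2 ≤ m → m ≤ n → 1 ≤ π m ∧ π m < m) → ∀ j, 1 ≤ j → j ≤ n →
    μ {ω | (∀ m ∈ Icc 2 n, par m ω = π m) ∧ u ω = j} =
      (∏ m ∈ Icc 2 n, ENNReal.ofReal (w (π m) / s (m - 1))) * ENNReal.ofReal (w j / s n)

def parentMapAt (n : ℕ) (par : ℕ → Ω → ℕ) (ω : Ω) : ℕ → ℕ :=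
  fun m => if m ∈ Icc 2 n then par m ω else 1

namespace IsWRRTSample

variable {μ : Measure Ω} {w s : ℕ → ℝ} {n : ℕ} {par : ℕ → Ω → ℕ} {u : Ω → ℕ}

lemma parentMapAt_mem (h : IsWRRTSample μ w s n par u) (ω : Ω) :
    parentMapAt n par ω ∈ parentMaps n := by
  refine mem_parentMaps.2 ⟨fun m hm => ?_, fun m hm => by simp [parentMapAt, hm]⟩
  have := h.par_lt m (mem_Icc.1 hm).1 (mem_Icc.1 hm).2 ω
  simp only [parentMapAt]
  rw [if_pos hm, mem_Icc]
  omega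

lemma measurable_parentMapAt (h : IsWRRTSample μ w s n par u) :
    Measurable (parentMapAt n par) :=
  measurable_pi_lambda _ fun m => by
    by_cases hm : m ∈ Icc 2 n <;> simp [parentMapAt, hm, h.measurable_par m]

lemma isAnc_iff_parentMapAt (h : IsWRRTSample μ w s n par u) (ω : Ω) (i : ℕ) :
    isAnc (fun m => par m ω) i (u ω) ↔ isAnc (parentMapAt n par ω) i (u ω) := by
  refine (isParentMap_of_mem_parentMaps (h.parentMapAt_mem ω)).isAnc_iff_of_eqOn (h.u_mem ω).1
    fun x hx => ?_
  have := h.u_mem ω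
  by_cases hx2 : x ∈ Icc 2 n
  · simp [parentMapAt, hx2]
  · obtain rfl : x = 1 := by grind
    simp [parentMapAt, hx2, h.par_one ω]

lemma measure_parentMapAt_eq (h : IsWRRTSample μ w s n par u) (hw : ∀ i, 1 ≤ i → 0 < w i)
    (hs : ∀ i, s i = ∑ j ∈ Icc 1 i, w j) {π : ℕ → ℕ} (hπ : π ∈ parentMaps n) {j : ℕ}
    (hj : j ∈ Icc 1 n) :
    μ ((fun ω => (parentMapAt n par ω, u ω)) ⁻¹' {(π, j)}) =
      ENNReal.ofReal (treeWeight w s n π * (w j / s n)) := by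
  obtain ⟨hπ_lt, hπ_one⟩ := mem_parentMaps.1 hπ
  have hj := mem_Icc.1 hj
  have hset : (fun ω => (parentMapAt n par ω, u ω)) ⁻¹' {(π, j)} =
      {ω | (∀ m ∈ Icc 2 n, par m ω = π m) ∧ u ω = j} := by
    ext ω
    simp only [Set.mem_preimage, Set.mem_singleton_iff, Prod.mk.injEq, funext_iff, parentMapAt,
      Set.mem_ofPred_eq]
    grind
  rw [hset, h.law π (fun m h2 hm => by grind) j hj.1 hj.2,
    ENNReal.ofReal_mul (treeWeight_nonneg hw hs hπ), treeWeight, ENNReal.ofReal_prod_of_nonneg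
      fun m hm => weight_div_partialSum_nonneg hw hs (mem_Icc.1 (hπ_lt m hm)).1 _]

theorem measurableSet_and_measure_forall_isAnc (h : IsWRRTSample μ w s n par u)
    (hw : ∀ i, 1 ≤ i → 0 < w i)
    (hs : ∀ i, s i = ∑ j ∈ Icc 1 i, w j) (hn : 1 ≤ n) {S : Finset ℕ} (hS : S ⊆ Icc 1 n) :
    MeasurableSet {ω | ∀ i ∈ S, isAnc (fun m => par m ω) i (u ω)} ∧
      μ {ω | ∀ i ∈ S, isAnc (fun m => par m ω) i (u ω)} = ∏ i ∈ S, ENNReal.ofReal (w i / s i) := by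
  have hX : Measurable fun ω => (parentMapAt n par ω, u ω) :=
    h.measurable_parentMapAt.prodMk h.measurable_u
  have hXF (ω : Ω) : (parentMapAt n par ω, u ω) ∈ parentMaps n ×ˢ Icc 1 n :=
    mem_product.2 ⟨h.parentMapAt_mem ω, mem_Icc.2 (h.u_mem ω)⟩
  simp only [h.isAnc_iff_parentMapAt]
  obtain ⟨hmeas, hsum⟩ :=
    measurableSet_setOf_and_measure_eq_sum (μ := μ) hX hXF fun x => ∀ i ∈ S, isAnc x.1 i x.2
  refine ⟨hmeas, ?_⟩
  rw [hsum, ← ENNReal.ofReal_prod_of_nonneg fun i hi =>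
      weight_div_partialSum_nonneg hw hs (mem_Icc.1 (hS hi)).1 _,
    ← wrrtExpect_forall_isAnc hs (fun i hi => (partialSum_pos hw hs hi).ne') hn S hS, wrrtExpect]
  simp only [mul_ite, mul_one, mul_zero]
  rw [← sum_product', ← sum_filter, ENNReal.ofReal_sum_of_nonneg]
  · refine sum_congr (by congr) fun x hx => ?_
    obtain ⟨hπ, hj⟩ := mem_product.1 (mem_filter.1 hx).1
    exact h.measure_parentMapAt_eq hw hs hπ hj
  · intro x hx
    obtain ⟨hπ, hj⟩ := mem_product.1 (mem_filter.1 hx).1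
    exact mul_nonneg (treeWeight_nonneg hw hs hπ)
      (weight_div_partialSum_nonneg hw hs (mem_Icc.1 hj).1 _)

end IsWRRTSample

end Sample

theorem wrrt_ancestors_indep_bernoulli_general
    {Ω : Type*} [MeasurableSpace Ω] (μ : Measure Ω) [IsProbabilityMeasure μ]
    (w : ℕ → ℝ) (hw : ∀ i, 1 ≤ i → 0 < w i)
    (s : ℕ → ℝ) (hs : ∀ i, s i = ∑ j ∈ Finset.Icc 1 i, w j)
    (n : ℕ)
    (par : ℕ → Ω → ℕ) (u : Ω → ℕ)
    (hmeas : ∀ m, Measurable (par m)) (humeas : Measurable u)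
    (hpar1 : ∀ ω, par 1 ω = 1)
    (hparlt : ∀ m, 2 ≤ m → m ≤ n → ∀ ω, 1 ≤ par m ω ∧ par m ω < m)
    (hurange : ∀ ω, 1 ≤ u ω ∧ u ω ≤ n)
    (hlaw : ∀ π : ℕ → ℕ, (∀ m, 2 ≤ m → m ≤ n → 1 ≤ π m ∧ π m < m) →
      ∀ j, 1 ≤ j → j ≤ n →
        μ {ω | (∀ m ∈ Finset.Icc 2 n, par m ω = π m) ∧ u ω = j}
          = (∏ m ∈ Finset.Icc 2 n, ENNReal.ofReal (w (π m) / s (m - 1)))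
            * ENNReal.ofReal (w j / s n)) :
    iIndepFun (m := fun _ : Fin n => (inferInstance : MeasurableSpace ℕ))
      (fun i ω => if isAnc (fun m => par m ω) (i.1 + 1) (u ω) then (1 : ℕ) else 0) μ
    ∧ ∀ i, 1 ≤ i → i ≤ n →
        μ {ω | isAnc (fun m => par m ω) i (u ω)} = ENNReal.ofReal (w i / s i) := by
  have h : IsWRRTSample μ w s n par u := ⟨hmeas, humeas, hpar1, hparlt, hurange, hlaw⟩
  obtain ⟨ω₀⟩ := nonempty_of_isProbabilityMeasure μ
  have hn : 1 ≤ n := (hurange ω₀).1.trans (hurange ω₀).2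
  have hmem (i : Fin n) : i.1 + 1 ∈ Icc 1 n := mem_Icc.2 ⟨by omega, i.2⟩
  have hsingle {i : ℕ} (hi : i ∈ Icc 1 n) :
      MeasurableSet {ω | isAnc (fun m => par m ω) i (u ω)} ∧
        μ {ω | isAnc (fun m => par m ω) i (u ω)} = ENNReal.ofReal (w i / s i) := by
    simpa using h.measurableSet_and_measure_forall_isAnc hw hs hn (singleton_subset_iff.2 hi)
  refine ⟨?_, fun i hi1 hin => (hsingle (mem_Icc.2 ⟨hi1, hin⟩)).2⟩
  have hind : iIndepSet (fun i : Fin n => {ω | isAnc (fun m => par m ω) (i.1 + 1) (u ω)}) μ := by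
    rw [iIndepSet_iff_meas_biInter fun i => (hsingle (hmem i)).1]
    intro F
    have hinter : ⋂ i ∈ F, {ω | isAnc (fun m => par m ω) (i.1 + 1) (u ω)} =
        {ω | ∀ i ∈ F.image (fun i : Fin n => i.1 + 1), isAnc (fun m => par m ω) i (u ω)} := by
      ext ω
      simp
    rw [hinter,
      (h.measurableSet_and_measure_forall_isAnc hw hs hn (image_subset_iff.2 fun i _ => hmem i)).2,
      prod_image fun i _ j _ hij => Fin.ext (by omega)]
    exact prod_congr rfl fun i _ => (hsingle (hmem i)).2.symm
  exact hind.iIndepFun_indicator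

/-- **Ancestors of a weight-proportional node are independent Bernoullis.**
`par` is the (random) parent map of the `n`-node `w`-WRRT (`par 1 = 1` by convention) and `u`
is a weight-proportional random node; their joint law is the WRRT law times `w j / s n`.
Then the indicators `(1_{ν_i ⪯ u})_{1 ≤ i ≤ n}` are independent Bernoulli random variables
with parameters `w i / s i`. -/
theorem wrrt_ancestors_indep_bernoulli
    {Ω : Type*} [MeasurableSpace Ω] (μ : Measure Ω) [IsProbabilityMeasure μ]
    (w : ℕ → ℝ) (hw : ∀ i, 1 ≤ i → 0 < w i)
    (s : ℕ → ℝ) (hs : ∀ i, s i = ∑ j ∈ Finset.Icc 1 i, w j)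
    (n : ℕ) (hn : 1 ≤ n)
    (par : ℕ → Ω → ℕ) (u : Ω → ℕ)
    (hmeas : ∀ m, Measurable (par m)) (humeas : Measurable u)
    (hpar1 : ∀ ω, par 1 ω = 1)
    (hparlt : ∀ m, 2 ≤ m → m ≤ n → ∀ ω, 1 ≤ par m ω ∧ par m ω < m)
    (hurange : ∀ ω, 1 ≤ u ω ∧ u ω ≤ n)
    (hlaw : ∀ π : ℕ → ℕ, (∀ m, 2 ≤ m → m ≤ n → 1 ≤ π m ∧ π m < m) →
      ∀ j, 1 ≤ j → j ≤ n →
        μ {ω | (∀ m ∈ Finset.Icc 2 n, par m ω = π m) ∧ u ω = j}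
          = (∏ m ∈ Finset.Icc 2 n, ENNReal.ofReal (w (π m) / s (m - 1)))
            * ENNReal.ofReal (w j / s n)) :
    iIndepFun (m := fun _ : Fin n => (inferInstance : MeasurableSpace ℕ))
      (fun i ω => if isAnc (fun m => par m ω) (i.1 + 1) (u ω) then (1 : ℕ) else 0) μ
    ∧ ∀ i, 1 ≤ i → i ≤ n →
        μ {ω | isAnc (fun m => par m ω) i (u ω)} = ENNReal.ofReal (w i / s i) :=
  wrrt_ancestors_indep_bernoulli_general μ w hw s hs n par u hmeas humeas hpar1 hparlt hurange hlaw
end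

section
/- Let w = (w_i)_{i≥1} be positive reals with partial sums s_i. Construct (T̃_n, ũ_n, ṽ_n) using independent Bernoulli variables B_n, B'_n of parameter w_n/s_n and independent indices U_n with P(U_n = i) = w_i/s_n, via the four-case rule: if (B_n,B'_n)=(0,0) attach ν_n to ν_{U_{n-1}} and keep ũ_n=ũ_{n-1}, ṽ_n=ṽ_{n-1}; if (1,0) attach ν_n to ũ_{n-1}, set ũ_n=ν_n, ṽ_n=ṽ_{n-1}; if (0,1) attach ν_n to ṽ_{n-1}, set ũ_n=ũ_{n-1}, ṽ_n=ν_n; if (1,1) attach ν_n to ũ_{n-1} and set ũ_n=ṽ_n=ν_n. Then for every increasing tree t on n nodes and all j,k ≤ n, P(T̃_n = t, ũ_n = ν_j, ṽ_n = ν_k) = (∏_{i=2}^n w_{π_t(i)}/s_{i-1}) · (w_j/s_n) · (w_k/s_n); i.e. T̃_n is a w-WRRT and, given T̃_n, ũ_n and ṽ_n are two independent weight-proportional random nodes. -/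
/-!
Write `ρ n i = w i / s n`. By induction on `n`, the probability of
`{T̃_n = t, ũ_n = ν_j, ṽ_n = ν_k}` is the tree weight times `ρ n j * ρ n k`. The state at time
`n` is measurable with respect to the randomness revealed so far, while `U_n, B_{n+1}, B'_{n+1}`
are fresh. So in each of the four cases the event at time `n + 1` is an event at time `n` (in
which the new parent is read off from `ũ_n`, `ṽ_n` or `U_n`) intersected with independent events,
and its probability factorises. A mark that stays put contributes
`ρ n j * P(B_{n+1} = 0) = (w j / s n) * (s n / s (n+1)) = ρ (n+1) j`, a mark that jumps to
`ν_{n+1}` contributes `ρ (n+1) (n+1)`, and when both marks jump the old `ṽ_n` is summed out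
using `∑ₖ ρ n k = 1`.
-/

open MeasureTheory ProbabilityTheory Finset

open scoped ENNReal

section CoordSigma

variable {Ω ι β : Type*} {mΩ : MeasurableSpace Ω} [MeasurableSpace β] {μ : Measure Ω}
  {f : ι → Ω → β} {S T : Set ι} {E F : Set Ω}

abbrev coordSigma (f : ι → Ω → β) (S : Set ι) : MeasurableSpace Ω :=
  ⨆ i ∈ S, MeasurableSpace.comap (f i) ‹_›

lemma coordSigma_mono (h : S ⊆ T) : coordSigma f S ≤ coordSigma f T :=
  biSup_mono h

lemma coordSigma_le (hf : ∀ i, Measurable (f i)) : coordSigma f S ≤ mΩ :=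
  iSup₂_le fun i _ => (hf i).comap_le

lemma comap_le_coordSigma {i : ι} (hi : i ∈ S) :
    MeasurableSpace.comap (f i) ‹_› ≤ coordSigma f S :=
  le_biSup (fun i => MeasurableSpace.comap (f i) _) hi

lemma MeasurableSet.inter_coordSigma_union (hE : MeasurableSet[coordSigma f S] E)
    (hF : MeasurableSet[coordSigma f T] F) : MeasurableSet[coordSigma f (S ∪ T)] (E ∩ F) :=
  (coordSigma_mono Set.subset_union_left _ hE).inter (coordSigma_mono Set.subset_union_right _ hF)

lemma ProbabilityTheory.iIndepFun.measure_inter_eq_mul_of_disjoint (hf : iIndepFun f μ)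
    (hmeas : ∀ i, Measurable (f i)) (hST : Disjoint S T) (hE : MeasurableSet[coordSigma f S] E)
    (hF : MeasurableSet[coordSigma f T] F) : μ (E ∩ F) = μ E * μ F :=
  (Indep_iff _ _ _).1 (indep_iSup_of_disjoint (fun i => (hmeas i).comap_le)
    ((iIndepFun_iff_iIndep _ _ _).1 hf) hST) E F hE hF

end CoordSigma

lemma ENNReal.ofReal_div_mul_ofReal_div {a b c : ℝ} (ha : 0 ≤ a) (hb : 0 < b) :
    ENNReal.ofReal (a / b) * ENNReal.ofReal (b / c) = ENNReal.ofReal (a / c) := by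
  rw [← ENNReal.ofReal_mul (div_nonneg ha hb.le), div_mul_div_cancel₀ hb.ne']

lemma measure_preimage_false {Ω : Type*} {mΩ : MeasurableSpace Ω} {μ : Measure Ω}
    [IsProbabilityMeasure μ] {X : Ω → Bool} (hX : Measurable X) {q : ℝ} (hq : 0 ≤ q)
    (h : μ (X ⁻¹' {true}) = ENNReal.ofReal q) : μ (X ⁻¹' {false}) = ENNReal.ofReal (1 - q) := by
  rw [← Bool.not_true, ← Bool.compl_singleton, Set.preimage_compl,
    prob_compl_eq_one_sub (hX (measurableSet_singleton _)), h, ENNReal.ofReal_sub 1 hq,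
    ENNReal.ofReal_one]

lemma eq_decide_comp_of_eq_ite {Ω : Type*} {b : Ω → Bool} {g : Ω → ℕ}
    (h : g = fun ω => if b ω then 1 else 0) : b = (fun x => decide (x = 1)) ∘ g := by
  subst h
  funext ω
  cases h : b ω <;> simp [h]

lemma forall_mem_Icc_succ_right {P : ℕ → Prop} {a n : ℕ} (h : a ≤ n + 1) :
    (∀ m ∈ Icc a (n + 1), P m) ↔ (∀ m ∈ Icc a n, P m) ∧ P (n + 1) := by
  rw [← insert_Icc_right_eq_Icc_add_one h, forall_mem_insert, and_comm]

namespace WRRT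

variable {Ω : Type*}

section Weights

variable {w s : ℕ → ℝ}

lemma partialSum_pos (hw : ∀ i, 1 ≤ i → 0 < w i) (hs : ∀ i, s i = ∑ j ∈ Icc 1 i, w j)
    {n : ℕ} (hn : 1 ≤ n) : 0 < s n := by
  rw [hs]
  exact sum_pos (fun i hi => hw i (mem_Icc.1 hi).1) ⟨1, mem_Icc.2 ⟨le_rfl, hn⟩⟩

lemma sum_ofReal_div_partialSum (hw : ∀ i, 1 ≤ i → 0 < w i)
    (hs : ∀ i, s i = ∑ j ∈ Icc 1 i, w j) {n : ℕ} (hn : 1 ≤ n) :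
    ∑ k ∈ Icc 1 n, ENNReal.ofReal (w k / s n) = 1 := by
  have hpos := partialSum_pos hw hs hn
  rw [← ENNReal.ofReal_sum_of_nonneg fun i hi => div_nonneg (hw i (mem_Icc.1 hi).1).le hpos.le,
    ← sum_div, ← hs, div_self hpos.ne', ENNReal.ofReal_one]

lemma one_sub_div_partialSum_succ (hw : ∀ i, 1 ≤ i → 0 < w i)
    (hs : ∀ i, s i = ∑ j ∈ Icc 1 i, w j) (n : ℕ) :
    1 - w (n + 1) / s (n + 1) = s n / s (n + 1) := by
  have hsucc : s (n + 1) = s n + w (n + 1) := by rw [hs, hs, sum_Icc_succ_top (by omega)]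
  have hpos := partialSum_pos hw hs n.succ_pos
  field_simp
  linarith

lemma ofReal_div_mul_measure_false {mΩ : MeasurableSpace Ω} {μ : Measure Ω}
    [IsProbabilityMeasure μ] (hw : ∀ i, 1 ≤ i → 0 < w i) (hs : ∀ i, s i = ∑ j ∈ Icc 1 i, w j)
    {X : Ω → Bool} (hX : Measurable X) {n : ℕ}
    (hlaw : μ (X ⁻¹' {true}) = ENNReal.ofReal (w (n + 1) / s (n + 1))) (hn : 1 ≤ n) {i : ℕ}
    (hi : i ∈ Icc 1 n) :
    ENNReal.ofReal (w i / s n) * μ (X ⁻¹' {false}) = ENNReal.ofReal (w i / s (n + 1)) := by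
  rw [measure_preimage_false hX
      (div_nonneg (hw _ n.succ_pos).le (partialSum_pos hw hs n.succ_pos).le) hlaw,
    one_sub_div_partialSum_succ hw hs,
    ENNReal.ofReal_div_mul_ofReal_div (hw i (mem_Icc.1 hi).1).le (partialSum_pos hw hs hn)]

end Weights

variable {B B' : ℕ → Ω → Bool} {U par u v : ℕ → Ω → ℕ}

structure IsTwoNodeDynamics (B B' : ℕ → Ω → Bool) (U par u v : ℕ → Ω → ℕ) : Prop where
  u_one : ∀ ω, u 1 ω = 1
  v_one : ∀ ω, v 1 ω = 1
  u_succ : ∀ n, 1 ≤ n → ∀ ω, u (n + 1) ω = if B (n + 1) ω then n + 1 else u n ω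
  v_succ : ∀ n, 1 ≤ n → ∀ ω, v (n + 1) ω = if B' (n + 1) ω then n + 1 else v n ω
  par_succ : ∀ n, 1 ≤ n → ∀ ω,
    par (n + 1) ω = if B (n + 1) ω then u n ω else if B' (n + 1) ω then v n ω else U n ω

/-- The event `{T̃_N = t, ũ_N = ν_j, ṽ_N = ν_k}`, where `t` is the increasing tree with parent
map `p`. -/
def stateEvent (par u v : ℕ → Ω → ℕ) (p : ℕ → ℕ) (N j k : ℕ) : Set Ω :=
  {ω | (∀ m ∈ Icc 2 N, par m ω = p m) ∧ u N ω = j ∧ v N ω = k}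

lemma measurableSet_stateEvent {m : MeasurableSpace Ω} {N : ℕ} (hu : Measurable (u N))
    (hv : Measurable (v N)) (hpar : ∀ i ∈ Icc 2 N, Measurable (par i)) (p : ℕ → ℕ)
    (j k : ℕ) : MeasurableSet (stateEvent par u v p N j k) := by
  have : stateEvent par u v p N j k =
      (⋂ i ∈ Icc 2 N, par i ⁻¹' {p i}) ∩ (u N ⁻¹' {j} ∩ v N ⁻¹' {k}) := by
    ext ω
    simp [stateEvent]
  rw [this]
  exact (measurableSet_biInter _ fun i hi => hpar i hi (measurableSet_singleton _)).inter
    ((hu (measurableSet_singleton _)).inter (hv (measurableSet_singleton _)))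

namespace IsTwoNodeDynamics

lemma of_cases (hu1 : ∀ ω, u 1 ω = 1) (hv1 : ∀ ω, v 1 ω = 1)
    (hrec : ∀ ω, ∀ m, 2 ≤ m →
      (B m ω = false → B' m ω = false →
        par m ω = U (m - 1) ω ∧ u m ω = u (m - 1) ω ∧ v m ω = v (m - 1) ω) ∧
      (B m ω = true → B' m ω = false →
        par m ω = u (m - 1) ω ∧ u m ω = m ∧ v m ω = v (m - 1) ω) ∧
      (B m ω = false → B' m ω = true →
        par m ω = v (m - 1) ω ∧ u m ω = u (m - 1) ω ∧ v m ω = m) ∧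
      (B m ω = true → B' m ω = true →
        par m ω = u (m - 1) ω ∧ u m ω = m ∧ v m ω = m)) :
    IsTwoNodeDynamics B B' U par u v := by
  refine ⟨hu1, hv1, ?_, ?_, ?_⟩ <;> intro n hn ω <;>
    obtain ⟨h00, h10, h01, h11⟩ := hrec ω (n + 1) (by omega) <;>
    simp only [Nat.add_sub_cancel] at h00 h10 h01 h11 <;>
    cases hb : B (n + 1) ω <;> cases hb' : B' (n + 1) ω <;> simp_all

lemma mem_Icc (hd : IsTwoNodeDynamics B B' U par u v) {N : ℕ} (hN : 1 ≤ N) (ω : Ω) :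
    u N ω ∈ Icc 1 N ∧ v N ω ∈ Icc 1 N := by
  induction N, hN using Nat.le_induction with
  | base => simp [hd.u_one, hd.v_one]
  | succ n hn ih =>
    simp only [Finset.mem_Icc] at ih ⊢
    rw [hd.u_succ n hn, hd.v_succ n hn]
    constructor <;> split <;> omega

lemma measurable_state (hd : IsTwoNodeDynamics B B' U par u v) {𝓕 : ℕ → MeasurableSpace Ω}
    (h𝓕 : Monotone 𝓕)
    (hB : ∀ n, Measurable[𝓕 (n + 1)] (B (n + 1)))
    (hB' : ∀ n, Measurable[𝓕 (n + 1)] (B' (n + 1))) (hU : ∀ n, Measurable[𝓕 (n + 1)] (U n))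
    {N : ℕ} (hN : 1 ≤ N) :
    Measurable[𝓕 N] (u N) ∧ Measurable[𝓕 N] (v N) ∧ ∀ m ∈ Icc 2 N, Measurable[𝓕 N] (par m) := by
  induction N, hN using Nat.le_induction with
  | base =>
    refine ⟨?_, ?_, fun m hm => absurd (Finset.mem_Icc.1 hm) (by omega)⟩
    · rw [show u 1 = fun _ => 1 from funext hd.u_one]
      exact measurable_const
    · rw [show v 1 = fun _ => 1 from funext hd.v_one]
      exact measurable_const
  | succ n hn ih =>
    obtain ⟨hun, hvn, hpar⟩ := ih
    have hle := h𝓕 n.le_succ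
    have hBset : MeasurableSet[𝓕 (n + 1)] {ω | B (n + 1) ω = true} :=
      hB n (measurableSet_singleton true)
    have hB'set : MeasurableSet[𝓕 (n + 1)] {ω | B' (n + 1) ω = true} :=
      hB' n (measurableSet_singleton true)
    refine ⟨?_, ?_, fun m hm => ?_⟩
    · rw [show u (n + 1) = _ from funext (hd.u_succ n hn)]
      exact Measurable.ite hBset measurable_const (hun.mono hle le_rfl)
    · rw [show v (n + 1) = _ from funext (hd.v_succ n hn)]
      exact Measurable.ite hB'set measurable_const (hvn.mono hle le_rfl)
    · obtain ⟨hm2, hmn⟩ := Finset.mem_Icc.1 hm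
      rcases hmn.lt_or_eq with hmn | rfl
      · exact (hpar m (Finset.mem_Icc.2 ⟨hm2, by omega⟩)).mono hle le_rfl
      · rw [show par (n + 1) = _ from funext (hd.par_succ n hn)]
        exact Measurable.ite hBset (hun.mono hle le_rfl)
          (Measurable.ite hB'set (hvn.mono hle le_rfl) (hU n))

variable {n j k : ℕ} (p : ℕ → ℕ)

/- The four cases of step `n + 1`. Since `ũ_n, ṽ_n ≤ n`, whether `j` or `k` equals `n + 1`
decides which of `B (n + 1)`, `B' (n + 1)` fired. -/

lemma stateEvent_succ_of_le_of_le (hd : IsTwoNodeDynamics B B' U par u v) (hn : 1 ≤ n)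
    (hj : j ≤ n) (hk : k ≤ n) :
    stateEvent par u v p (n + 1) j k = stateEvent par u v p n j k ∩ U n ⁻¹' {p (n + 1)} ∩
      B (n + 1) ⁻¹' {false} ∩ B' (n + 1) ⁻¹' {false} := by
  ext ω
  simp only [stateEvent, Set.mem_ofPred_eq, Set.mem_inter_iff, Set.mem_preimage,
    Set.mem_singleton_iff]
  rw [forall_mem_Icc_succ_right (by omega), hd.u_succ n hn, hd.v_succ n hn, hd.par_succ n hn]
  cases B (n + 1) ω <;> cases B' (n + 1) ω <;> simp <;> first | tauto | (intros; omega)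

lemma stateEvent_succ_of_le_of_eq (hd : IsTwoNodeDynamics B B' U par u v) (hn : 1 ≤ n)
    (hj : j ≤ n) :
    stateEvent par u v p (n + 1) j (n + 1) = stateEvent par u v p n j (p (n + 1)) ∩
      B (n + 1) ⁻¹' {false} ∩ B' (n + 1) ⁻¹' {true} := by
  ext ω
  have := hd.mem_Icc hn ω
  simp only [Finset.mem_Icc] at this
  simp only [stateEvent, Set.mem_ofPred_eq, Set.mem_inter_iff, Set.mem_preimage,
    Set.mem_singleton_iff]
  rw [forall_mem_Icc_succ_right (by omega), hd.u_succ n hn, hd.v_succ n hn, hd.par_succ n hn]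
  cases B (n + 1) ω <;> cases B' (n + 1) ω <;> simp <;> first | tauto | (intros; omega)

lemma stateEvent_succ_of_eq_of_le (hd : IsTwoNodeDynamics B B' U par u v) (hn : 1 ≤ n)
    (hk : k ≤ n) :
    stateEvent par u v p (n + 1) (n + 1) k = stateEvent par u v p n (p (n + 1)) k ∩
      B (n + 1) ⁻¹' {true} ∩ B' (n + 1) ⁻¹' {false} := by
  ext ω
  have := hd.mem_Icc hn ω
  simp only [Finset.mem_Icc] at this
  simp only [stateEvent, Set.mem_ofPred_eq, Set.mem_inter_iff, Set.mem_preimage,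
    Set.mem_singleton_iff]
  rw [forall_mem_Icc_succ_right (by omega), hd.u_succ n hn, hd.v_succ n hn, hd.par_succ n hn]
  cases B (n + 1) ω <;> cases B' (n + 1) ω <;> simp <;> first | tauto | (intros; omega)

lemma stateEvent_succ_of_eq_of_eq (hd : IsTwoNodeDynamics B B' U par u v) (hn : 1 ≤ n) :
    stateEvent par u v p (n + 1) (n + 1) (n + 1) =
      (⋃ k ∈ Icc 1 n, stateEvent par u v p n (p (n + 1)) k) ∩
        B (n + 1) ⁻¹' {true} ∩ B' (n + 1) ⁻¹' {true} := by
  ext ω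
  have := hd.mem_Icc hn ω
  simp only [Finset.mem_Icc] at this
  simp only [stateEvent, Set.mem_ofPred_eq, Set.mem_inter_iff, Set.mem_preimage,
    Set.mem_singleton_iff, Set.mem_iUnion, exists_prop]
  rw [forall_mem_Icc_succ_right (by omega), hd.u_succ n hn, hd.v_succ n hn, hd.par_succ n hn]
  cases B (n + 1) ω <;> cases B' (n + 1) ω <;> simp <;> first | tauto | (intros; omega)

end IsTwoNodeDynamics

section Probability

variable {mΩ : MeasurableSpace Ω} {μ : Measure Ω} {𝓕 : ℕ → MeasurableSpace Ω}
  {ρ : ℕ → ℕ → ℝ≥0∞} {n : ℕ}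

def IsFreshAfter (μ : Measure Ω) (𝓕 : ℕ → MeasurableSpace Ω) (B B' : ℕ → Ω → Bool)
    (U : ℕ → Ω → ℕ) (n : ℕ) : Prop :=
  ∀ (E : Set Ω) (A : Set ℕ) (b b' : Bool), MeasurableSet[𝓕 n] E →
    μ (E ∩ U n ⁻¹' A ∩ B (n + 1) ⁻¹' {b} ∩ B' (n + 1) ⁻¹' {b'}) =
      μ E * μ (U n ⁻¹' A) * μ (B (n + 1) ⁻¹' {b}) * μ (B' (n + 1) ⁻¹' {b'})

lemma IsFreshAfter.measure_inter_bool [IsProbabilityMeasure μ]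
    (h : IsFreshAfter μ 𝓕 B B' U n) {E : Set Ω} (hE : MeasurableSet[𝓕 n] E) (b b' : Bool) :
    μ (E ∩ B (n + 1) ⁻¹' {b} ∩ B' (n + 1) ⁻¹' {b'}) =
      μ E * μ (B (n + 1) ⁻¹' {b}) * μ (B' (n + 1) ⁻¹' {b'}) := by
  simpa using h E Set.univ b b' hE

lemma measure_biUnion_stateEvent {p : ℕ → ℕ} {j : ℕ} (K : Finset ℕ)
    (hE : ∀ k ∈ K, MeasurableSet (stateEvent par u v p n j k)) :
    μ (⋃ k ∈ K, stateEvent par u v p n j k) = ∑ k ∈ K, μ (stateEvent par u v p n j k) :=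
  measure_biUnion_finset
    (fun _ _ _ _ hkl => Set.disjoint_left.2 fun _ hk hl => hkl (hk.2.2.symm.trans hl.2.2)) hE

theorem IsTwoNodeDynamics.measure_stateEvent_succ [IsProbabilityMeasure μ]
    (hd : IsTwoNodeDynamics B B' U par u v) (h𝓕 : 𝓕 n ≤ mΩ)
    (hE : ∀ p j k, MeasurableSet[𝓕 n] (stateEvent par u v p n j k))
    (hfresh : IsFreshAfter μ 𝓕 B B' U n) (hU : ∀ i ∈ Icc 1 n, μ (U n ⁻¹' {i}) = ρ n i)
    (hBtrue : μ (B (n + 1) ⁻¹' {true}) = ρ (n + 1) (n + 1))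
    (hB'true : μ (B' (n + 1) ⁻¹' {true}) = ρ (n + 1) (n + 1))
    (hBfalse : ∀ i ∈ Icc 1 n, ρ n i * μ (B (n + 1) ⁻¹' {false}) = ρ (n + 1) i)
    (hB'false : ∀ i ∈ Icc 1 n, ρ n i * μ (B' (n + 1) ⁻¹' {false}) = ρ (n + 1) i)
    (hsum : ∑ k ∈ Icc 1 n, ρ n k = 1) (hn : 1 ≤ n) {p : ℕ → ℕ} (hp : p (n + 1) ∈ Icc 1 n)
    {c : ℝ≥0∞}
    (ih : ∀ j ∈ Icc 1 n, ∀ k ∈ Icc 1 n, μ (stateEvent par u v p n j k) = c * ρ n j * ρ n k)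
    {j k : ℕ} (hj : j ∈ Icc 1 (n + 1)) (hk : k ∈ Icc 1 (n + 1)) :
    μ (stateEvent par u v p (n + 1) j k) = c * ρ n (p (n + 1)) * ρ (n + 1) j * ρ (n + 1) k := by
  rw [Finset.mem_Icc] at hj hk
  obtain hjn | rfl : j ≤ n ∨ j = n + 1 := by omega
  all_goals obtain hkn | rfl : k ≤ n ∨ k = n + 1 := by omega
  · have hj' : j ∈ Icc 1 n := Finset.mem_Icc.2 ⟨hj.1, hjn⟩
    have hk' : k ∈ Icc 1 n := Finset.mem_Icc.2 ⟨hk.1, hkn⟩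
    rw [hd.stateEvent_succ_of_le_of_le p hn hjn hkn, hfresh _ _ _ _ (hE p j k), ih j hj' k hk',
      hU _ hp, ← hBfalse j hj', ← hB'false k hk']
    ring
  · have hj' : j ∈ Icc 1 n := Finset.mem_Icc.2 ⟨hj.1, hjn⟩
    rw [hd.stateEvent_succ_of_le_of_eq p hn hjn, hfresh.measure_inter_bool (hE _ _ _),
      ih j hj' _ hp, hB'true, ← hBfalse j hj']
    ring
  · have hk' : k ∈ Icc 1 n := Finset.mem_Icc.2 ⟨hk.1, hkn⟩
    rw [hd.stateEvent_succ_of_eq_of_le p hn hkn, hfresh.measure_inter_bool (hE _ _ _),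
      ih _ hp k hk', hBtrue, ← hB'false k hk']
    ring
  · rw [hd.stateEvent_succ_of_eq_of_eq p hn,
      hfresh.measure_inter_bool (measurableSet_biUnion _ fun k _ => hE _ _ _),
      measure_biUnion_stateEvent _ fun k _ => h𝓕 _ (hE _ _ _), sum_congr rfl (ih _ hp),
      ← mul_sum, hsum, hBtrue, hB'true]
    ring

/-- `ρ n i` plays the role of `w i / s n`, the probability that a weight-proportional node at
time `n` is `ν_i`. -/
theorem IsTwoNodeDynamics.measure_stateEvent [IsProbabilityMeasure μ]
    (hd : IsTwoNodeDynamics B B' U par u v) (h𝓕 : ∀ n, 𝓕 n ≤ mΩ)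
    (hE : ∀ n, 1 ≤ n → ∀ p j k, MeasurableSet[𝓕 n] (stateEvent par u v p n j k))
    (hfresh : ∀ n, IsFreshAfter μ 𝓕 B B' U n)
    (hU : ∀ n, 1 ≤ n → ∀ i ∈ Icc 1 n, μ (U n ⁻¹' {i}) = ρ n i)
    (hBtrue : ∀ n, μ (B (n + 1) ⁻¹' {true}) = ρ (n + 1) (n + 1))
    (hB'true : ∀ n, μ (B' (n + 1) ⁻¹' {true}) = ρ (n + 1) (n + 1))
    (hBfalse : ∀ n, 1 ≤ n → ∀ i ∈ Icc 1 n, ρ n i * μ (B (n + 1) ⁻¹' {false}) = ρ (n + 1) i)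
    (hB'false : ∀ n, 1 ≤ n → ∀ i ∈ Icc 1 n, ρ n i * μ (B' (n + 1) ⁻¹' {false}) = ρ (n + 1) i)
    (hsum : ∀ n, 1 ≤ n → ∑ k ∈ Icc 1 n, ρ n k = 1) {N : ℕ} {p : ℕ → ℕ}
    (hp : ∀ m, 2 ≤ m → m ≤ N → 1 ≤ p m ∧ p m < m) {j k : ℕ} (hj : j ∈ Icc 1 N)
    (hk : k ∈ Icc 1 N) :
    μ (stateEvent par u v p N j k) = (∏ m ∈ Icc 2 N, ρ (m - 1) (p m)) * ρ N j * ρ N k := by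
  have hN : 1 ≤ N := (Finset.mem_Icc.1 hj).1.trans (Finset.mem_Icc.1 hj).2
  induction N, hN using Nat.le_induction generalizing j k with
  | base =>
    obtain rfl : j = 1 := by simp only [Finset.mem_Icc] at hj; omega
    obtain rfl : k = 1 := by simp only [Finset.mem_Icc] at hk; omega
    have huniv : stateEvent par u v p 1 1 1 = Set.univ := by
      ext ω
      simp [stateEvent, hd.u_one, hd.v_one]
    have hρ : ρ 1 1 = 1 := by simpa using hsum 1 le_rfl
    simp [huniv, hρ]
  | succ n hn ih =>
    have hpn : p (n + 1) ∈ Icc 1 n := by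
      have := hp (n + 1) (by omega) le_rfl
      rw [Finset.mem_Icc]
      omega
    rw [prod_Icc_succ_top (by omega), Nat.add_sub_cancel]
    exact hd.measure_stateEvent_succ (h𝓕 n) (hE n hn) (hfresh n) (hU n hn) (hBtrue n)
      (hB'true n) (hBfalse n hn) (hB'false n hn) (hsum n hn) hn hpn
      (fun j hj k hk => ih (fun m hm2 hmn => hp m hm2 (by omega)) hj hk) hj hk

end Probability

section Encoding

variable {mΩ : MeasurableSpace Ω} {μ : Measure Ω} {f : ℕ ⊕ ℕ ⊕ ℕ → Ω → ℕ}

/-- Coordinate `inl m` drives `B m`, `inr (inl m)` drives `B' m` and `inr (inr m)` drives `U m`,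
which is first used at step `m + 1`. -/
def revealStep : ℕ ⊕ ℕ ⊕ ℕ → ℕ
  | .inl m => m
  | .inr (.inl m) => m
  | .inr (.inr m) => m + 1

abbrev history (f : ℕ ⊕ ℕ ⊕ ℕ → Ω → ℕ) (n : ℕ) : MeasurableSpace Ω :=
  coordSigma f {i | revealStep i ≤ n}

lemma monotone_history : Monotone (history f) :=
  fun _ _ hab => coordSigma_mono fun _ hi => le_trans hi hab

lemma IsTwoNodeDynamics.measurableSet_stateEvent_history
    (hd : IsTwoNodeDynamics B B' U par u v)
    (hB : ∀ m, Measurable[MeasurableSpace.comap (f (.inl m)) inferInstance] (B m))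
    (hB' : ∀ m, Measurable[MeasurableSpace.comap (f (.inr (.inl m))) inferInstance] (B' m))
    (hU : ∀ m, f (.inr (.inr m)) = U m) {N : ℕ} (hN : 1 ≤ N) (p : ℕ → ℕ) (j k : ℕ) :
    MeasurableSet[history f N] (stateEvent par u v p N j k) := by
  obtain ⟨hu, hv, hpar⟩ := hd.measurable_state monotone_history
    (fun n => (hB (n + 1)).mono (comap_le_coordSigma (by simp [revealStep])) le_rfl)
    (fun n => (hB' (n + 1)).mono (comap_le_coordSigma (by simp [revealStep])) le_rfl)
    (fun n => hU n ▸ (comap_measurable _).mono (comap_le_coordSigma (by simp [revealStep])) le_rfl)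
    hN
  exact measurableSet_stateEvent hu hv hpar p j k

lemma isFreshAfter_history (hf : iIndepFun f μ) (hmeas : ∀ i, Measurable (f i))
    (hB : ∀ m, Measurable[MeasurableSpace.comap (f (.inl m)) inferInstance] (B m))
    (hB' : ∀ m, Measurable[MeasurableSpace.comap (f (.inr (.inl m))) inferInstance] (B' m))
    (hU : ∀ m, f (.inr (.inr m)) = U m) (n : ℕ) : IsFreshAfter μ (history f) B B' U n := by
  intro E A b b' hE
  have hA : MeasurableSet[coordSigma f {.inr (.inr n)}] (U n ⁻¹' A) :=
    comap_le_coordSigma (Set.mem_singleton _) _ ⟨A, .of_discrete, by rw [hU]⟩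
  have hb : MeasurableSet[coordSigma f {.inl (n + 1)}] (B (n + 1) ⁻¹' {b}) :=
    comap_le_coordSigma (Set.mem_singleton _) _ (hB (n + 1) (measurableSet_singleton b))
  have hb' : MeasurableSet[coordSigma f {.inr (.inl (n + 1))}] (B' (n + 1) ⁻¹' {b'}) :=
    comap_le_coordSigma (Set.mem_singleton _) _ (hB' (n + 1) (measurableSet_singleton b'))
  rw [hf.measure_inter_eq_mul_of_disjoint hmeas ?_
      ((hE.inter_coordSigma_union hA).inter_coordSigma_union hb) hb',
    hf.measure_inter_eq_mul_of_disjoint hmeas ?_ (hE.inter_coordSigma_union hA) hb,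
    hf.measure_inter_eq_mul_of_disjoint hmeas ?_ hE hA] <;> simp [revealStep]

end Encoding

end WRRT

open WRRT

theorem wrrt_two_node_coupling_general
    {Ω : Type*} [MeasurableSpace Ω] (μ : Measure Ω) [IsProbabilityMeasure μ]
    (w : ℕ → ℝ) (hw : ∀ i, 1 ≤ i → 0 < w i)
    (s : ℕ → ℝ) (hs : ∀ i, s i = ∑ j ∈ Finset.Icc 1 i, w j)
    (B B' : ℕ → Ω → Bool) (U : ℕ → Ω → ℕ)
    (f : ℕ ⊕ ℕ ⊕ ℕ → Ω → ℕ)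
    (hfB : ∀ i, f (Sum.inl i) = fun ω => if B i ω then 1 else 0)
    (hfB' : ∀ i, f (Sum.inr (Sum.inl i)) = fun ω => if B' i ω then 1 else 0)
    (hfU : ∀ i, f (Sum.inr (Sum.inr i)) = U i)
    (hmeas : ∀ j, Measurable (f j))
    (hindep : iIndepFun f μ)
    (hBlaw : ∀ i, 1 ≤ i → μ {ω | B i ω = true} = ENNReal.ofReal (w i / s i))
    (hB'law : ∀ i, 1 ≤ i → μ {ω | B' i ω = true} = ENNReal.ofReal (w i / s i))
    (hUlaw : ∀ m, 1 ≤ m → ∀ i, 1 ≤ i → i ≤ m →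
      μ {ω | U m ω = i} = ENNReal.ofReal (w i / s m))
    (par u v : ℕ → Ω → ℕ)
    (hu1 : ∀ ω, u 1 ω = 1) (hv1 : ∀ ω, v 1 ω = 1)
    (hrec : ∀ ω, ∀ m, 2 ≤ m →
      (B m ω = false → B' m ω = false →
        par m ω = U (m - 1) ω ∧ u m ω = u (m - 1) ω ∧ v m ω = v (m - 1) ω) ∧
      (B m ω = true → B' m ω = false →
        par m ω = u (m - 1) ω ∧ u m ω = m ∧ v m ω = v (m - 1) ω) ∧
      (B m ω = false → B' m ω = true →
        par m ω = v (m - 1) ω ∧ u m ω = u (m - 1) ω ∧ v m ω = m) ∧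
      (B m ω = true → B' m ω = true →
        par m ω = u (m - 1) ω ∧ u m ω = m ∧ v m ω = m))
    (n j k : ℕ) (hj : 1 ≤ j) (hjn : j ≤ n) (hk : 1 ≤ k) (hkn : k ≤ n)
    (π : ℕ → ℕ) (hπ : ∀ m, 2 ≤ m → m ≤ n → 1 ≤ π m ∧ π m < m) :
    μ {ω | (∀ m ∈ Finset.Icc 2 n, par m ω = π m) ∧ u n ω = j ∧ v n ω = k}
      = (∏ m ∈ Finset.Icc 2 n, ENNReal.ofReal (w (π m) / s (m - 1)))
        * ENNReal.ofReal (w j / s n) * ENNReal.ofReal (w k / s n) := by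
  have hd := IsTwoNodeDynamics.of_cases hu1 hv1 hrec
  have hBf (m : ℕ) := eq_decide_comp_of_eq_ite (hfB m)
  have hB'f (m : ℕ) := eq_decide_comp_of_eq_ite (hfB' m)
  have hBσ : ∀ m, Measurable[MeasurableSpace.comap (f (.inl m)) inferInstance] (B m) :=
    fun m => hBf m ▸ measurable_from_nat.comp (comap_measurable _)
  have hB'σ : ∀ m, Measurable[MeasurableSpace.comap (f (.inr (.inl m))) inferInstance] (B' m) :=
    fun m => hB'f m ▸ measurable_from_nat.comp (comap_measurable _)
  have hBmeas (m : ℕ) : Measurable (B m) := (hBσ m).mono (hmeas _).comap_le le_rfl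
  have hB'meas (m : ℕ) : Measurable (B' m) := (hB'σ m).mono (hmeas _).comap_le le_rfl
  exact hd.measure_stateEvent (ρ := fun n i => ENNReal.ofReal (w i / s n))
    (fun _ => coordSigma_le hmeas)
    (fun _ hN => hd.measurableSet_stateEvent_history hBσ hB'σ hfU hN)
    (isFreshAfter_history hindep hmeas hBσ hB'σ hfU)
    (fun m hm i hi => hUlaw m hm i (Finset.mem_Icc.1 hi).1 (Finset.mem_Icc.1 hi).2)
    (fun m => hBlaw (m + 1) m.succ_pos) (fun m => hB'law (m + 1) m.succ_pos)
    (fun m hm _ hi => ofReal_div_mul_measure_false hw hs (hBmeas _) (hBlaw _ m.succ_pos) hm hi)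
    (fun m hm _ hi => ofReal_div_mul_measure_false hw hs (hB'meas _) (hB'law _ m.succ_pos) hm hi)
    (fun _ hm => sum_ofReal_div_partialSum hw hs hm) hπ (Finset.mem_Icc.2 ⟨hj, hjn⟩)
    (Finset.mem_Icc.2 ⟨hk, hkn⟩)

/-- **Coupled construction of the WRRT with two weight-proportional nodes.**
Using independent Bernoulli variables `B m, B' m` (parameter `w m / s m`) and independent
indices `U m` (`P(U m = i) = w i / s m`), nodes attach according to the four-case rule, and
for every increasing tree `t` on `n` vertices with parent map `π` and all `1 ≤ j, k ≤ n`,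
`P(T̃_n = t, ũ_n = ν_j, ṽ_n = ν_k) = (∏_{m=2}^n w (π m)/s (m-1)) (w j / s n) (w k / s n)`. -/
theorem wrrt_two_node_coupling
    {Ω : Type*} [MeasurableSpace Ω] (μ : Measure Ω) [IsProbabilityMeasure μ]
    (w : ℕ → ℝ) (hw : ∀ i, 1 ≤ i → 0 < w i)
    (s : ℕ → ℝ) (hs : ∀ i, s i = ∑ j ∈ Finset.Icc 1 i, w j)
    (B B' : ℕ → Ω → Bool) (U : ℕ → Ω → ℕ)
    (f : ℕ ⊕ ℕ ⊕ ℕ → Ω → ℕ)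
    (hfB : ∀ i, f (Sum.inl i) = fun ω => if B i ω then 1 else 0)
    (hfB' : ∀ i, f (Sum.inr (Sum.inl i)) = fun ω => if B' i ω then 1 else 0)
    (hfU : ∀ i, f (Sum.inr (Sum.inr i)) = U i)
    (hmeas : ∀ j, Measurable (f j))
    (hindep : iIndepFun f μ)
    (hBlaw : ∀ i, 1 ≤ i → μ {ω | B i ω = true} = ENNReal.ofReal (w i / s i))
    (hB'law : ∀ i, 1 ≤ i → μ {ω | B' i ω = true} = ENNReal.ofReal (w i / s i))
    (hUlaw : ∀ m, 1 ≤ m → ∀ i, 1 ≤ i → i ≤ m →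
      μ {ω | U m ω = i} = ENNReal.ofReal (w i / s m))
    (hUrange : ∀ m, 1 ≤ m → ∀ ω, 1 ≤ U m ω ∧ U m ω ≤ m)
    (par u v : ℕ → Ω → ℕ)
    (hu1 : ∀ ω, u 1 ω = 1) (hv1 : ∀ ω, v 1 ω = 1)
    (hrec : ∀ ω, ∀ m, 2 ≤ m →
      (B m ω = false → B' m ω = false →
        par m ω = U (m - 1) ω ∧ u m ω = u (m - 1) ω ∧ v m ω = v (m - 1) ω) ∧
      (B m ω = true → B' m ω = false →
        par m ω = u (m - 1) ω ∧ u m ω = m ∧ v m ω = v (m - 1) ω) ∧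
      (B m ω = false → B' m ω = true →
        par m ω = v (m - 1) ω ∧ u m ω = u (m - 1) ω ∧ v m ω = m) ∧
      (B m ω = true → B' m ω = true →
        par m ω = u (m - 1) ω ∧ u m ω = m ∧ v m ω = m))
    (n j k : ℕ) (hn : 1 ≤ n) (hj : 1 ≤ j) (hjn : j ≤ n) (hk : 1 ≤ k) (hkn : k ≤ n)
    (π : ℕ → ℕ) (hπ : ∀ m, 2 ≤ m → m ≤ n → 1 ≤ π m ∧ π m < m) :
    μ {ω | (∀ m ∈ Finset.Icc 2 n, par m ω = π m) ∧ u n ω = j ∧ v n ω = k}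
      = (∏ m ∈ Finset.Icc 2 n, ENNReal.ofReal (w (π m) / s (m - 1)))
        * ENNReal.ofReal (w j / s n) * ENNReal.ofReal (w k / s n) :=
  wrrt_two_node_coupling_general μ w hw s hs B B' U f hfB hfB' hfU hmeas hindep hBlaw hB'law hUlaw
    par u v hu1 hv1 hrec n j k hj hjn hk hkn π hπ
end
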